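/- arXiv:2107.06588 — 4 statements merged into one kernel-verified Lean document; each statement's English description precedes it below -/
import Mathlib

section
/- Let u be a measurable function on Ω, A ⊆ ∂Ω Borel, ℋ a Borel outer measure, and 0 < β ≤ 1/2. Then ℋ({x ∈ A : θ_*({u>t},x) ≥ β}) = ℋ({x ∈ A : T_βu(x) > t}) for almost every t ∈ ℝ (with respect to Lebesgue measure). -/
open MeasureTheory Metric Filter Set
open scoped ENNReal NNReal

/-- Lower density of a set `E` at a point `x`. -/
noncomputable def loDen {X : Type*} [MetricSpace X] [MeasurableSpace X]
    (μ : Measure X) (E : Set X) (x : X) : ℝ≥0∞ :=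
  Filter.liminf (fun r : ℝ => μ (E ∩ ball x r) / μ (ball x r)) (nhdsWithin 0 (Set.Ioi 0))

/-- The trace `T_βu(x) = sup {t : θ_*({u>t},x) ≥ β}`, valued in `EReal`. -/
noncomputable def traceB {X : Type*} [MetricSpace X] [MeasurableSpace X]
    (μ : Measure X) (Ω : Set X) (u : X → ℝ) (β : ℝ≥0∞) (x : X) : EReal :=
  sSup ((fun t : ℝ => (t : EReal)) '' {t : ℝ | β ≤ loDen μ {y ∈ Ω | t < u y} x})

lemma loDen_mono {X : Type*} [MetricSpace X] [MeasurableSpace X]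
    (μ : Measure X) {E F : Set X} (h : E ⊆ F) (x : X) :
    loDen μ E x ≤ loDen μ F x := by
  exact Filter.liminf_le_liminf (Eventually.of_forall fun r =>
    ENNReal.div_le_div_right (measure_mono (inter_subset_inter_left _ h)) _)

theorem stmt4 {X : Type*} [MetricSpace X] [MeasurableSpace X] [BorelSpace X]
    (μ : Measure X) (Ω : Set X) (hΩ : IsOpen Ω) (u : X → ℝ) (hu : Measurable u)
    (hball : ∀ (y : X) (r : ℝ), 0 < r → 0 < μ (ball y r) ∧ μ (ball y r) < ⊤)
    (β : ℝ≥0∞) (hβ0 : 0 < β) (hβ : β ≤ 1 / 2)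
    (H : Measure X) (A : Set X) (hA : A ⊆ frontier Ω) (hAmeas : MeasurableSet A) :
    ∀ᵐ t : ℝ,
      H {x ∈ A | β ≤ loDen μ {y ∈ Ω | t < u y} x}
        = H {x ∈ A | (t : EReal) < traceB μ Ω u β x} := by
  set S : ℝ → Set X := fun t => {x ∈ A | β ≤ loDen μ {y ∈ Ω | t < u y} x} with hS
  set U : ℝ → Set X := fun t => {x ∈ A | (t : EReal) < traceB μ Ω u β x} with hU
  set f : ℝ → ℝ≥0∞ := fun t => H (S t) with hfdef
  have hSanti : ∀ ⦃s t : ℝ⦄, s ≤ t → S t ⊆ S s := by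
    intro s t hst x hx
    refine ⟨hx.1, le_trans hx.2 (loDen_mono μ ?_ x)⟩
    intro y hy
    exact ⟨hy.1, lt_of_le_of_lt hst hy.2⟩
  have hUS : ∀ t : ℝ, U t ⊆ S t := by
    intro t x hx
    obtain ⟨b, hb, htb⟩ := lt_sSup_iff.1 hx.2
    obtain ⟨s, hs, rfl⟩ := hb
    have hts : t < s := EReal.coe_lt_coe_iff.1 htb
    refine ⟨hx.1, le_trans hs (loDen_mono μ ?_ x)⟩
    intro y hy
    exact ⟨hy.1, lt_trans hts hy.2⟩
  have hSU : ∀ ⦃s t : ℝ⦄, t < s → S s ⊆ U t := by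
    intro s t hts x hx
    exact ⟨hx.1, lt_of_lt_of_le (EReal.coe_lt_coe_iff.2 hts) (le_sSup ⟨s, hx.2, rfl⟩)⟩
  have hf : Antitone f := fun s t hst => measure_mono (hSanti hst)
  filter_upwards [hf.countable_not_continuousAt.ae_notMem volume] with t ht
  have hcont : ContinuousAt f t := not_not.1 ht
  refine le_antisymm ?_ (measure_mono (hUS t))
  have htend : Tendsto f (nhdsWithin t (Ioi t)) (nhds (f t)) :=
    tendsto_nhdsWithin_of_tendsto_nhds hcont
  refine le_of_tendsto htend ?_
  filter_upwards [self_mem_nhdsWithin] with s hs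
  exact measure_mono (hSU hs)
end

section
/- Let C ⊆ [0,1] be the ternary Cantor set and Ω := (0,1) \ C = ⋃_j Ω_j with Ω_j the stage-j removed open intervals (each of length 3^{-j}). Then for every x ∈ C and every t > 0, limsup_{r→0} L¹(B(x,r) ∩ {u > t}) / L¹(B(x,r)) ≥ 1/4, where u := Σ_j b_j χ_{Ω_j} with b_j = j for odd j, b_j = -j for even j, and L¹ denotes Lebesgue measure. -/
open MeasureTheory Metric Filter Set
open scoped ENNReal NNReal

/-- `cantorRemoved j` is the union of the `2^j` open middle-third intervals (each of length
`3^{-(j+1)}`) removed at stage `j+1` of the construction of the ternary Cantor set;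
in the paper's notation this is `Ω_{j+1}`. -/
def cantorRemoved (j : ℕ) : Set ℝ := preCantorSet j \ preCantorSet (j + 1)

/-- The function `u = ∑_{j≥1} b_j χ_{Ω_j}` with `b_j = j` for odd `j`, `b_j = -j` for even `j`
(indexed so that `cantorRemoved j = Ω_{j+1}` and `b_{j+1} = (-1)^j (j+1)`). -/
noncomputable def cantorFun (x : ℝ) : ℝ :=
  ∑' j : ℕ, ((-1 : ℝ) ^ j * (j + 1)) * (cantorRemoved j).indicator 1 x

lemma myPreCantor_subset_unit (n : ℕ) : preCantorSet n ⊆ Set.Icc 0 1 := by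
  induction n with
  | zero => simp
  | succ n ih =>
    rintro x (⟨z, hz, rfl⟩ | ⟨z, hz, rfl⟩) <;>
      obtain ⟨h0, h1⟩ := ih hz <;> exact ⟨by linarith, by linarith⟩

lemma myPreCantor_succ_subset (n : ℕ) : preCantorSet (n + 1) ⊆ preCantorSet n := by
  induction n with
  | zero => exact myPreCantor_subset_unit 1
  | succ n ih =>
    rintro x (⟨z, hz, rfl⟩ | ⟨z, hz, rfl⟩)
    · exact Or.inl ⟨z, ih hz, rfl⟩
    · exact Or.inr ⟨z, ih hz, rfl⟩

lemma myPreCantor_antitone : Antitone preCantorSet :=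
  antitone_nat_of_succ_le myPreCantor_succ_subset

lemma cantor_structure (n : ℕ) : ∀ x ∈ preCantorSet n, ∃ a : ℝ,
    0 ≤ a ∧ a + (1/3)^n ≤ 1 ∧ a ≤ x ∧ x ≤ a + (1/3)^n ∧
    Set.Ioo (a + (1/3)^(n+1)) (a + 2*(1/3)^(n+1)) ⊆ cantorRemoved n := by
  induction n with
  | zero =>
    intro x hx
    refine ⟨0, le_refl 0, by norm_num, hx.1, by simpa using hx.2, ?_⟩
    intro y hy
    simp only [Set.mem_Ioo, zero_add, pow_one] at hy
    obtain ⟨hy1, hy2⟩ := hy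
    constructor
    · exact ⟨by linarith, by linarith⟩
    · rintro (⟨z, hz, rfl⟩ | ⟨z, hz, rfl⟩)
      · have := (myPreCantor_subset_unit 0 hz).2; linarith
      · have := (myPreCantor_subset_unit 0 hz).1; linarith
  | succ n ih =>
    intro x hx
    have hp : (0:ℝ) < (1/3)^n := by positivity
    have e1 : ((1:ℝ)/3)^(n+1) = (1/3)^n/3 := by rw [pow_succ]; ring
    have e2 : ((1:ℝ)/3)^(n+1+1) = (1/3)^n/9 := by rw [pow_succ, pow_succ]; ring
    rcases hx with ⟨z, hz, rfl⟩ | ⟨z, hz, rfl⟩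
    · obtain ⟨a, ha0, ha1, haz, hza, hmid⟩ := ih z hz
      rw [e1] at hmid
      refine ⟨a/3, by linarith, by rw [e1]; linarith, by linarith, by rw [e1]; linarith, ?_⟩
      intro y hy
      rw [e2] at hy
      obtain ⟨hy1, hy2⟩ := hy
      have h3y : 3*y ∈ cantorRemoved n := hmid ⟨by linarith, by linarith⟩
      constructor
      · exact Or.inl ⟨3*y, h3y.1, by ring⟩
      · rintro (⟨w, hw, hwy⟩ | ⟨w, hw, hwy⟩)
        · have hw3 : w = 3*y := by simpa using (by linarith [hwy] : w = 3*y)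
          exact h3y.2 (hw3 ▸ hw)
        · have hw0 : (0:ℝ) ≤ w := (myPreCantor_subset_unit _ hw).1
          have : (2 + w)/3 = y := hwy
          linarith
    · obtain ⟨a, ha0, ha1, haz, hza, hmid⟩ := ih z hz
      rw [e1] at hmid
      refine ⟨(2+a)/3, by linarith, by rw [e1]; linarith, by linarith, by rw [e1]; linarith, ?_⟩
      intro y hy
      rw [e2] at hy
      obtain ⟨hy1, hy2⟩ := hy
      have h3y : 3*y - 2 ∈ cantorRemoved n := hmid ⟨by linarith, by linarith⟩
      constructor
      · exact Or.inr ⟨3*y - 2, h3y.1, by ring⟩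
      · rintro (⟨w, hw, hwy⟩ | ⟨w, hw, hwy⟩)
        · have hw1 : w ≤ 1 := (myPreCantor_subset_unit _ hw).2
          have : w/3 = y := hwy
          linarith
        · have hw3 : w = 3*y - 2 := by
            have : (2 + w)/3 = y := hwy
            linarith
          exact h3y.2 (hw3 ▸ hw)

lemma cantorFun_eq (n : ℕ) {y : ℝ} (hy : y ∈ cantorRemoved n) :
    cantorFun y = (-1)^n * (n+1) := by
  unfold cantorFun
  rw [tsum_eq_single n ?_]
  · rw [Set.indicator_of_mem hy]; simp
  · intro m hmn
    have hym : y ∉ cantorRemoved m := by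
      rcases lt_or_gt_of_ne hmn with h | h
      · intro hc
        exact hc.2 (myPreCantor_antitone (by omega : m + 1 ≤ n) hy.1)
      · intro hc
        exact hy.2 (myPreCantor_antitone (by omega : n + 1 ≤ m) hc.1)
    rw [Set.indicator_of_notMem hym, mul_zero]

theorem stmt6 (x : ℝ) (hx : x ∈ cantorSet) (t : ℝ) (ht : 0 < t) :
    (1 / 4 : ℝ≥0∞) ≤
      Filter.limsup
        (fun r : ℝ => volume ({y : ℝ | t < cantorFun y} ∩ ball x r) / volume (ball x r))
        (nhdsWithin 0 (Set.Ioi 0)) := by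
  set S := {y : ℝ | t < cantorFun y} with hS
  obtain ⟨k₀, hk₀⟩ := exists_nat_gt t
  have key : ∀ k : ℕ, k₀ ≤ k →
      (1/4 : ℝ≥0∞) ≤ volume (S ∩ ball x (2*(1/3:ℝ)^(2*k+1))) /
        volume (ball x (2*(1/3:ℝ)^(2*k+1))) := by
    intro k hk
    have hxn : x ∈ preCantorSet (2*k) := Set.mem_iInter.mp hx (2*k)
    obtain ⟨a, ha0, ha1, hax, hxa, hmid⟩ := cantor_structure (2*k) x hxn
    set h : ℝ := (1/3)^(2*k+1) with hh
    have hhpos : (0:ℝ) < h := by positivity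
    have h3 : ((1:ℝ)/3)^(2*k) = 3*h := by rw [hh, pow_succ]; ring
    have h2 : a + 2*h = a + 2*(1/3:ℝ)^(2*k+1) := by rw [hh]
    rw [h3] at hxa
    have hball : Set.Ioo (a+h) (a+2*h) ⊆ ball x (2*h) := by
      intro y hy
      rw [mem_ball, Real.dist_eq, abs_lt]
      obtain ⟨h1, h2⟩ := hy
      constructor <;> linarith
    have hsub : Set.Ioo (a+h) (a+2*h) ⊆ S ∩ ball x (2*h) := by
      intro y hy
      refine ⟨?_, hball hy⟩
      have hyr : y ∈ cantorRemoved (2*k) := hmid hy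
      have hval := cantorFun_eq (2*k) hyr
      have hpow : (-1:ℝ)^(2*k) = 1 := by rw [pow_mul]; norm_num
      rw [hpow, one_mul] at hval
      have htk : t < (2*k : ℕ) + 1 := by
        have h1 : (k₀:ℝ) ≤ k := Nat.cast_le.mpr hk
        have h0 : (0:ℝ) ≤ (k:ℝ) := Nat.cast_nonneg k
        push_cast
        linarith
      simp only [hS, Set.mem_setOf_eq]
      rw [hval]
      exact_mod_cast htk
    have hvol1 : ENNReal.ofReal h ≤ volume (S ∩ ball x (2*h)) := by
      calc ENNReal.ofReal h = volume (Set.Ioo (a+h) (a+2*h)) := by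
            rw [Real.volume_Ioo]; ring_nf
        _ ≤ _ := measure_mono hsub
    have hvb : volume (ball x (2*h)) = ENNReal.ofReal (4*h) := by
      rw [Real.volume_ball]; ring_nf
    rw [hvb, ENNReal.le_div_iff_mul_le
      (Or.inl (by simp [ENNReal.ofReal_eq_zero]; linarith))
      (Or.inl ENNReal.ofReal_ne_top)]
    calc (1/4:ℝ≥0∞) * ENNReal.ofReal (4*h)
        = (1/4:ℝ≥0∞) * (4 * ENNReal.ofReal h) := by
          rw [ENNReal.ofReal_mul (by norm_num : (0:ℝ) ≤ 4), ENNReal.ofReal_ofNat]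
      _ = ENNReal.ofReal h := by
          rw [← mul_assoc, ENNReal.div_mul_cancel (by norm_num) (by norm_num), one_mul]
      _ ≤ _ := hvol1
  have htend : Tendsto (fun k : ℕ => 2*(1/3:ℝ)^(2*k+1)) atTop (nhdsWithin 0 (Set.Ioi 0)) := by
    rw [tendsto_nhdsWithin_iff]
    constructor
    · have h1 : Tendsto (fun m : ℕ => (1/3:ℝ)^m) atTop (nhds 0) :=
        tendsto_pow_atTop_nhds_zero_of_lt_one (by norm_num) (by norm_num)
      have h2 : Tendsto (fun k : ℕ => 2*k+1) atTop atTop :=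
        tendsto_atTop_mono (fun k => by simpa using (by omega : k ≤ 2*k+1)) tendsto_id
      have := (h1.comp h2).const_mul (2:ℝ)
      simpa [Function.comp] using this
    · exact Filter.Eventually.of_forall fun k => by
        simp only [Set.mem_Ioi]; positivity
  have hfreq : ∃ᶠ r in nhdsWithin (0:ℝ) (Set.Ioi 0),
      (1/4:ℝ≥0∞) ≤ volume (S ∩ ball x r) / volume (ball x r) :=
    htend.frequently ((Filter.eventually_atTop.mpr ⟨k₀, key⟩).frequently)
  exact Filter.le_limsup_of_frequently_le hfreq
end

section
/- In ℝ² with measure dμ = (2π)⁻¹|x - x₀|⁻¹ dL², the codimension-one Hausdorff measure of the singleton {x₀} satisfies 1/4 ≤ ℋ({x₀}) ≤ 1. In particular, ℋ({x₀}) > 0. -/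
open MeasureTheory Metric Filter Set
open scoped ENNReal NNReal
open scoped ENNReal NNReal

/-- Codimension-one Hausdorff content at scale `R > 0`:
`ℋ_R(A) = inf { ∑_j μ(B(x_j,r_j))/r_j : A ⊆ ⋃_j B(x_j,r_j), r_j ≤ R }`.
(Balls of nonpositive radius are empty and contribute `0/0 = 0`.) -/
noncomputable def codimContent {X : Type*} [MetricSpace X] [MeasurableSpace X]
    (μ : Measure X) (R : ℝ) (A : Set X) : ℝ≥0∞ :=
  ⨅ (c : ℕ → X × ℝ) (_ : A ⊆ ⋃ j, ball (c j).1 (c j).2) (_ : ∀ j, (c j).2 ≤ R),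
    ∑' j, μ (ball (c j).1 (c j).2) / ENNReal.ofReal (c j).2

/-- Codimension-one Hausdorff measure `ℋ(A) = lim_{R→0} ℋ_R(A) = sup_{R>0} ℋ_R(A)`. -/
noncomputable def codimH {X : Type*} [MetricSpace X] [MeasurableSpace X]
    (μ : Measure X) (A : Set X) : ℝ≥0∞ :=
  ⨆ (R : ℝ) (_ : 0 < R), codimContent μ R A

/-- Centered codimension-one Hausdorff content at scale `R` in the space `Ω̄` with the measure
`μ_{Ω̄}(D) = μ(D ∩ Ω)`: the coverings are by balls of `Ω̄` centered at points of `A`, and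
`μ_{Ω̄}(B_{Ω̄}(x,r)) = μ(B(x,r) ∩ Ω)`. -/
noncomputable def codimContentCentered {X : Type*} [MetricSpace X] [MeasurableSpace X]
    (μ : Measure X) (Ω : Set X) (R : ℝ) (A : Set X) : ℝ≥0∞ :=
  ⨅ (c : ℕ → X × ℝ) (_ : ∀ j, (c j).1 ∈ A) (_ : A ⊆ ⋃ j, ball (c j).1 (c j).2)
    (_ : ∀ j, (c j).2 ≤ R),
    ∑' j, μ (ball (c j).1 (c j).2 ∩ Ω) / ENNReal.ofReal (c j).2

/-- Centered codimension-one Hausdorff measure in `(Ω̄, d, μ_{Ω̄})`. -/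
noncomputable def codimHCentered {X : Type*} [MetricSpace X] [MeasurableSpace X]
    (μ : Measure X) (Ω : Set X) (A : Set X) : ℝ≥0∞ :=
  ⨆ (R : ℝ) (_ : 0 < R), codimContentCentered μ Ω R A


local notation "E2" => EuclideanSpace ℝ (Fin 2)

lemma aux_polar (g : ℝ → ℝ≥0∞) (hg : Measurable g) :
    ∫⁻ x : E2, g ‖x‖ = (2 * ENNReal.ofReal Real.pi) * ∫⁻ y in Ioi (0:ℝ), ENNReal.ofReal y * g y := by
  have hdim : Module.finrank ℝ E2 = 2 := finrank_euclideanSpace_fin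
  have h0 : MeasurableSet ({0}ᶜ : Set E2) := (measurableSet_singleton 0).compl
  have step1 : ∫⁻ x : E2, g ‖x‖ ∂volume
      = ∫⁻ x : ({0}ᶜ : Set E2), g ‖(x : E2)‖ ∂((volume : Measure E2).comap (↑)) := by
    rw [lintegral_subtype_comap h0 (fun x => g ‖x‖), restrict_compl_singleton]
  have hmp := Measure.measurePreserving_homeomorphUnitSphereProd (volume : Measure E2)
  rw [hdim] at hmp
  have hf : Measurable (fun p : sphere (0:E2) 1 × Ioi (0:ℝ) => g p.2.1) :=
    hg.comp (measurable_subtype_coe.comp measurable_snd)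
  have step2 : ∫⁻ x : ({0}ᶜ : Set E2), g ‖(x : E2)‖ ∂((volume : Measure E2).comap (↑))
      = ∫⁻ p : sphere (0:E2) 1 × Ioi (0:ℝ), g p.2.1
          ∂((volume : Measure E2).toSphere.prod (.volumeIoiPow (2 - 1))) := by
    rw [← hmp.lintegral_comp hf]
    congr 1
    funext x
    simp [homeomorphUnitSphereProd]
  have step3 : ∫⁻ p : sphere (0:E2) 1 × Ioi (0:ℝ), g p.2.1
          ∂((volume : Measure E2).toSphere.prod (.volumeIoiPow (2 - 1)))
      = (volume : Measure E2).toSphere univ * ∫⁻ y : Ioi (0:ℝ), g y.1 ∂(Measure.volumeIoiPow 1) := by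
    rw [lintegral_prod _ hf.aemeasurable]
    simp [lintegral_const, mul_comm]
  have step4 : ∫⁻ y : Ioi (0:ℝ), g y.1 ∂(Measure.volumeIoiPow 1)
      = ∫⁻ y in Ioi (0:ℝ), ENNReal.ofReal y * g y := by
    rw [Measure.volumeIoiPow,
      lintegral_withDensity_eq_lintegral_mul _
        (f := fun r : Ioi (0:ℝ) => ENNReal.ofReal (r.1 ^ 1))
        ((measurable_subtype_coe.pow_const 1).ennreal_ofReal)
        (g := fun y : Ioi (0:ℝ) => g y.1) (hg.comp measurable_subtype_coe)]
    simp only [Pi.mul_apply, pow_one]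
    exact lintegral_subtype_comap measurableSet_Ioi (fun y => ENNReal.ofReal y * g y)
  have hsph : (volume : Measure E2).toSphere univ = 2 * ENNReal.ofReal Real.pi := by
    rw [Measure.toSphere_apply_univ, finrank_euclideanSpace_fin, EuclideanSpace.volume_ball]
    norm_num [Real.sq_sqrt Real.pi_nonneg, Real.Gamma_two]
  rw [step1, step2, step3, step4, hsph]

lemma mu_ball (x₀ : E2) (r : ℝ) :
    (volume.withDensity fun x => ENNReal.ofReal ((2*Real.pi)⁻¹ * ‖x - x₀‖⁻¹)) (ball x₀ r)
      = ENNReal.ofReal r := by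
  rcases le_or_gt r 0 with hr | hr
  · rw [ball_eq_empty.2 hr, measure_empty, ENNReal.ofReal_eq_zero.2 hr]
  set c : ℝ := (2*Real.pi)⁻¹ with hc
  have hcpos : 0 < c := by positivity
  set g : ℝ → ℝ≥0∞ := (Iio r).indicator (fun t => ENNReal.ofReal (c * t⁻¹)) with hgdef
  have hgm : Measurable g :=
    ((measurable_const.mul measurable_inv).ennreal_ofReal).indicator measurableSet_Iio
  have step1 : (volume.withDensity fun x => ENNReal.ofReal (c * ‖x - x₀‖⁻¹)) (ball x₀ r)
      = ∫⁻ z in ball (0:E2) r, ENNReal.ofReal (c * ‖z‖⁻¹) := by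
    rw [withDensity_apply _ measurableSet_ball]
    have hmp : MeasurePreserving (fun z : E2 => z + x₀) volume volume :=
      measurePreserving_add_right volume x₀
    have hemb : MeasurableEmbedding (fun z : E2 => z + x₀) :=
      (Homeomorph.addRight x₀).measurableEmbedding
    rw [← hmp.setLIntegral_comp_preimage_emb hemb
      (fun y => ENNReal.ofReal (c * ‖y - x₀‖⁻¹)) (ball x₀ r)]
    have : (fun z : E2 => z + x₀) ⁻¹' ball x₀ r = ball (0:E2) r := by
      ext z; simp [mem_ball, dist_eq_norm]
    rw [this]
    simp
  have step2 : ∫⁻ z in ball (0:E2) r, ENNReal.ofReal (c * ‖z‖⁻¹) = ∫⁻ z : E2, g ‖z‖ := by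
    rw [← lintegral_indicator measurableSet_ball]
    refine lintegral_congr fun z => ?_
    by_cases hz : z ∈ ball (0:E2) r
    · rw [indicator_of_mem hz, hgdef, indicator_of_mem (by simpa [mem_ball_zero_iff] using hz)]
    · rw [indicator_of_notMem hz, hgdef,
        indicator_of_notMem (by simpa [mem_ball_zero_iff] using hz)]
  have step3 : ∫⁻ y in Ioi (0:ℝ), ENNReal.ofReal y * g y
      = ENNReal.ofReal c * ENNReal.ofReal r := by
    have : ∀ y : ℝ, ENNReal.ofReal y * g y
        = (Iio r).indicator (fun y => ENNReal.ofReal y * ENNReal.ofReal (c * y⁻¹)) y := by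
      intro y
      by_cases hy : y ∈ Iio r
      · rw [hgdef, indicator_of_mem hy, indicator_of_mem hy]
      · rw [hgdef, indicator_of_notMem hy, indicator_of_notMem hy, mul_zero]
    simp_rw [this]
    rw [setLIntegral_indicator measurableSet_Iio, show Iio r ∩ Ioi (0:ℝ) = Ioo 0 r by
      ext y; simp [mem_Ioo, and_comm]]
    have heq : ∀ y ∈ Ioo (0:ℝ) r,
        ENNReal.ofReal y * ENNReal.ofReal (c * y⁻¹) = ENNReal.ofReal c := by
      intro y hy
      rw [← ENNReal.ofReal_mul hy.1.le]
      rw [mul_comm c y⁻¹, ← mul_assoc, mul_inv_cancel₀ hy.1.ne', one_mul]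
    rw [setLIntegral_congr_fun measurableSet_Ioo heq,
      setLIntegral_const, Real.volume_Ioo, sub_zero]
  calc (volume.withDensity fun x => ENNReal.ofReal ((2*Real.pi)⁻¹ * ‖x - x₀‖⁻¹)) (ball x₀ r)
      = ∫⁻ z : E2, g ‖z‖ := by rw [← step2, ← step1]
    _ = (2 * ENNReal.ofReal Real.pi) * (ENNReal.ofReal c * ENNReal.ofReal r) := by
        rw [aux_polar g hgm, step3]
    _ = ENNReal.ofReal r := by
        rw [← mul_assoc, hc]
        have : (2 : ℝ≥0∞) * ENNReal.ofReal Real.pi * ENNReal.ofReal (2*Real.pi)⁻¹ = 1 := by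
          rw [show (2:ℝ≥0∞) = ENNReal.ofReal 2 by norm_num, ← ENNReal.ofReal_mul (by norm_num),
            ← ENNReal.ofReal_mul (by positivity), mul_inv_cancel₀ (by positivity)]
          norm_num
        rw [this, one_mul]

lemma mu_ball_ge (x₀ x : E2) (r : ℝ) (hx : dist x₀ x < r) :
    ENNReal.ofReal (r / 4)
      ≤ (volume.withDensity fun y => ENNReal.ofReal ((2*Real.pi)⁻¹ * ‖y - x₀‖⁻¹)) (ball x r) := by
  have hr : 0 < r := lt_of_le_of_lt dist_nonneg hx
  rw [withDensity_apply _ measurableSet_ball]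
  have hvol : volume (ball x r) = ENNReal.ofReal (Real.pi * r ^ 2) := by
    rw [EuclideanSpace.volume_ball]
    rw [show ((Fintype.card (Fin 2) : ℝ)) / 2 + 1 = 2 by norm_num]
    rw [Real.Gamma_two]
    rw [← ENNReal.ofReal_pow hr.le]
    rw [← ENNReal.ofReal_mul (by positivity)]
    norm_num [Real.sq_sqrt Real.pi_nonneg, mul_comm]
  have key : ∀ᵐ y ∂(volume.restrict (ball x r)),
      ENNReal.ofReal ((2*Real.pi)⁻¹ * (2*r)⁻¹) ≤ ENNReal.ofReal ((2*Real.pi)⁻¹ * ‖y - x₀‖⁻¹) := by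
    have hne : ∀ᵐ y ∂(volume : Measure E2), y ≠ x₀ := by
      rw [ae_iff]
      simpa using measure_singleton (μ := (volume : Measure E2)) x₀
    filter_upwards [ae_restrict_mem measurableSet_ball, ae_restrict_of_ae hne] with y hy hy0
    apply ENNReal.ofReal_le_ofReal
    apply mul_le_mul_of_nonneg_left _ (by positivity)
    have h1 : 0 < ‖y - x₀‖ := by
      simpa [norm_sub_eq_zero_iff] using norm_pos_iff.2 (sub_ne_zero.2 hy0)
    have h2 : ‖y - x₀‖ < 2 * r := by
      rw [mem_ball] at hy
      calc ‖y - x₀‖ = dist y x₀ := (dist_eq_norm _ _).symm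
        _ ≤ dist y x + dist x x₀ := dist_triangle _ _ _
        _ < r + r := by rw [dist_comm x x₀]; exact add_lt_add hy hx
        _ = 2 * r := by ring
    exact inv_anti₀ h1 h2.le
  calc ENNReal.ofReal (r / 4)
      = ENNReal.ofReal ((2*Real.pi)⁻¹ * (2*r)⁻¹) * ENNReal.ofReal (Real.pi * r ^ 2) := by
        rw [← ENNReal.ofReal_mul (by positivity)]
        congr 1
        field_simp
        ring
    _ = ∫⁻ _ in ball x r, ENNReal.ofReal ((2*Real.pi)⁻¹ * (2*r)⁻¹) ∂volume := by
        rw [setLIntegral_const, hvol]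
    _ ≤ ∫⁻ y in ball x r, ENNReal.ofReal ((2*Real.pi)⁻¹ * ‖y - x₀‖⁻¹) ∂volume :=
        lintegral_mono_ae key

theorem stmt11 (x₀ : EuclideanSpace ℝ (Fin 2))
    (μ : Measure (EuclideanSpace ℝ (Fin 2)))
    (hμ : μ = volume.withDensity
      (fun x => ENNReal.ofReal ((2 * Real.pi)⁻¹ * ‖x - x₀‖⁻¹))) :
    (1 / 4 : ℝ≥0∞) ≤ codimH μ {x₀} ∧ codimH μ {x₀} ≤ 1 := by
  subst hμ
  have hquarter : (1 / 4 : ℝ≥0∞) = ENNReal.ofReal (1/4) := by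
    rw [ENNReal.ofReal_div_of_pos (by norm_num)]
    norm_num
  constructor
  · refine le_iSup₂_of_le 1 one_pos ?_
    unfold codimContent
    refine le_iInf fun c => le_iInf fun hcov => le_iInf fun _ => ?_
    obtain ⟨j, hj⟩ := mem_iUnion.1 (hcov (mem_singleton x₀))
    rw [mem_ball] at hj
    have hr : 0 < (c j).2 := lt_of_le_of_lt dist_nonneg hj
    refine le_trans ?_ (ENNReal.le_tsum j)
    rw [ENNReal.le_div_iff_mul_le (Or.inl (by simp [hr]))
      (Or.inl ENNReal.ofReal_ne_top)]
    calc (1/4 : ℝ≥0∞) * ENNReal.ofReal (c j).2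
        = ENNReal.ofReal ((c j).2 / 4) := by
          rw [hquarter, ← ENNReal.ofReal_mul (by norm_num)]
          congr 1
          ring
      _ ≤ _ := mu_ball_ge x₀ (c j).1 (c j).2 hj
  · refine iSup₂_le fun R hR => ?_
    set c : ℕ → EuclideanSpace ℝ (Fin 2) × ℝ := fun j => (x₀, if j = 0 then R else 0) with hc
    have hcov : {x₀} ⊆ ⋃ j, ball (c j).1 (c j).2 := by
      intro y hy
      rw [mem_singleton_iff] at hy
      subst hy
      exact mem_iUnion.2 ⟨0, by simp [hc, mem_ball, hR]⟩
    have hrad : ∀ j, (c j).2 ≤ R := fun j => by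
      by_cases h : j = 0 <;> simp [hc, h, hR.le]
    refine le_trans (iInf_le_of_le c (iInf_le_of_le hcov (iInf_le _ hrad))) ?_
    rw [tsum_eq_single 0 (fun j hj => by simp [hc, hj, mu_ball])]
    simp only [hc, if_pos rfl]
    rw [mu_ball, ENNReal.div_self (by simp [hR]) ENNReal.ofReal_ne_top]
end

section
/- Let (X,d,μ) be a complete metric measure space with μ doubling, Ω ⊆ X open, and suppose for every t ≠ 0 and a.e. t ∈ ℝ: (a) ℋ(Σ_β{u₀>t} ∩ Ω₀ \ Ω) = 0, (b) P({u₀>t}, Ω) < ∞, and (c) the comparison C⁻¹ ℋ(Σ_βE ∩ U) ≤ P(E,U) ≤ C ℋ(Σ_βE ∩ U) holds for open U and measurable E (Federer-type characterization), and (d) P(E,A) = ∫_{Σ_γE ∩ A} θ_E dℋ with θ_E ≥ α > 0 for Borel A ⊆ U whenever P(E,U) < ∞. Then P({u₀>t}, Ω₀) < ∞ and P({u₀>t}, Ω₀ \ Ω) = 0 for a.e. t ≠ 0, and consequently by the coarea formula ‖Du₀‖(Ω₀) = ‖Du₀‖(Ω). -/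
open MeasureTheory Metric Filter Set
open scoped ENNReal NNReal

/-- The strong boundary `Σ_b E = {x : θ_*(E,x) ≥ b and θ_*(X∖E,x) ≥ b}`. -/
def strongBdry {X : Type*} [MetricSpace X] [MeasurableSpace X]
    (μ : Measure X) (b : ℝ≥0∞) (E : Set X) : Set X :=
  {x | b ≤ loDen μ E x ∧ b ≤ loDen μ Eᶜ x}

theorem stmt19 {X : Type*} [MetricSpace X] [CompleteSpace X]
    [MeasurableSpace X] [BorelSpace X] (μ : Measure X)
    (C_d : ℝ≥0∞) (hCd : C_d < ⊤)
    (hdoubling : ∀ (x : X) (r : ℝ), μ (ball x (2 * r)) ≤ C_d * μ (ball x r))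
    (hballpos : ∀ (x : X) (r : ℝ), 0 < r → 0 < μ (ball x r) ∧ μ (ball x r) < ⊤)
    (Ω Ω₀ : Set X) (hΩ : IsOpen Ω) (hΩ₀ : IsOpen Ω₀) (hsub : Ω ⊆ Ω₀)
    (u : X → ℝ) (hu : Measurable u)
    -- `u₀` is the zero extension of `u` from `Ω` to `Ω₀`
    (u₀ : X → ℝ) (hu₀ : u₀ = Set.indicator Ω u)
    -- superlevel sets of `u₀` in `Ω₀`
    (Et : ℝ → Set X) (hEt : ∀ t, Et t = {x ∈ Ω₀ | t < u₀ x})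
    (hEtmeas : ∀ t, MeasurableSet (Et t))
    -- `P` is the perimeter functional, `H` the codimension-one Hausdorff measure
    (P : Set X → Set X → ℝ≥0∞) (H : Measure X)
    (β γ α C : ℝ≥0∞) (hβ : 0 < β) (hβγ : β ≤ γ) (hα : 0 < α) (hC : 1 ≤ C) (hCfin : C < ⊤)
    -- `P(E,·)` is additive on disjoint Borel sets inside an open set of finite perimeter
    (hPadd : ∀ E U, IsOpen U → P E U < ⊤ → ∀ A B : Set X, MeasurableSet A →
      MeasurableSet B → Disjoint A B → A ⊆ U → B ⊆ U → P E (A ∪ B) = P E A + P E B)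
    -- (a)
    (ha : ∀ᵐ t : ℝ, t ≠ 0 → H (strongBdry μ β (Et t) ∩ (Ω₀ \ Ω)) = 0)
    -- (b): `u ∈ BV(Ω)`, so `P({u₀>t},Ω) < ∞` for a.e. `t`
    (hb : ∀ᵐ t : ℝ, t ≠ 0 → P (Et t) Ω < ⊤)
    (hBV : ∫⁻ t : ℝ, P (Et t) Ω < ⊤)
    -- (c): Federer-type comparison between perimeter and strong boundary
    (hc : ∀ U : Set X, IsOpen U → ∀ E : Set X, MeasurableSet E →
      C⁻¹ * H (strongBdry μ β E ∩ U) ≤ P E U ∧ P E U ≤ C * H (strongBdry μ β E ∩ U))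
    -- (d): integral representation of perimeter with density `θ_E ∈ [α, C_d]`
    (θ : Set X → X → ℝ≥0∞) (hθ : ∀ E x, α ≤ θ E x ∧ θ E x ≤ C_d)
    (hd : ∀ E U : Set X, IsOpen U → P E U < ⊤ → ∀ A : Set X, A ⊆ U → MeasurableSet A →
      P E A = ∫⁻ x in strongBdry μ γ E ∩ A, θ E x ∂H) :
    (∀ᵐ t : ℝ, t ≠ 0 → P (Et t) Ω₀ < ⊤ ∧ P (Et t) (Ω₀ \ Ω) = 0) ∧
    ∫⁻ t : ℝ, P (Et t) Ω₀ = ∫⁻ t : ℝ, P (Et t) Ω := by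
  have hC0 : C ≠ 0 := fun h => by simp [h] at hC
  have hCtop : C ≠ ⊤ := hCfin.ne
  -- main pointwise claim
  have key : ∀ᵐ t : ℝ, t ≠ 0 →
      (P (Et t) Ω₀ < ⊤ ∧ P (Et t) (Ω₀ \ Ω) = 0 ∧ P (Et t) Ω₀ = P (Et t) Ω) := by
    filter_upwards [ha, hb] with t hat hbt ht
    have ha' := hat ht
    have hbt' := hbt ht
    -- H(Σβ ∩ Ω) ≤ C * P
    have hlow := (hc Ω hΩ (Et t) (hEtmeas t)).1
    have hHΩ : H (strongBdry μ β (Et t) ∩ Ω) ≤ C * P (Et t) Ω := by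
      calc H (strongBdry μ β (Et t) ∩ Ω)
          = C * (C⁻¹ * H (strongBdry μ β (Et t) ∩ Ω)) := by
            rw [← mul_assoc, ENNReal.mul_inv_cancel hC0 hCtop, one_mul]
        _ ≤ C * P (Et t) Ω := mul_le_mul_right hlow C
    -- H(Σβ ∩ Ω₀) ≤ H(Σβ ∩ Ω)
    have hsplit : strongBdry μ β (Et t) ∩ Ω₀ ⊆
        (strongBdry μ β (Et t) ∩ Ω) ∪ (strongBdry μ β (Et t) ∩ (Ω₀ \ Ω)) := by
      intro x ⟨hx, hx0⟩
      by_cases hxΩ : x ∈ Ω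
      · exact Or.inl ⟨hx, hxΩ⟩
      · exact Or.inr ⟨hx, hx0, hxΩ⟩
    have hHΩ₀ : H (strongBdry μ β (Et t) ∩ Ω₀) ≤ C * P (Et t) Ω := by
      calc H (strongBdry μ β (Et t) ∩ Ω₀)
          ≤ H (strongBdry μ β (Et t) ∩ Ω) + H (strongBdry μ β (Et t) ∩ (Ω₀ \ Ω)) :=
            (measure_mono hsplit).trans (measure_union_le _ _)
        _ = H (strongBdry μ β (Et t) ∩ Ω) := by rw [ha', add_zero]
        _ ≤ C * P (Et t) Ω := hHΩ
    have hfin : P (Et t) Ω₀ < ⊤ := by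
      calc P (Et t) Ω₀ ≤ C * H (strongBdry μ β (Et t) ∩ Ω₀) :=
            (hc Ω₀ hΩ₀ (Et t) (hEtmeas t)).2
        _ ≤ C * (C * P (Et t) Ω) := mul_le_mul_right hHΩ₀ C
        _ < ⊤ := ENNReal.mul_lt_top hCfin (ENNReal.mul_lt_top hCfin hbt')
    -- P(Et, Ω₀ \ Ω) = 0 via (d)
    have hγβ : strongBdry μ γ (Et t) ⊆ strongBdry μ β (Et t) := fun x hx =>
      ⟨le_trans hβγ hx.1, le_trans hβγ hx.2⟩
    have hmeas0 : H (strongBdry μ γ (Et t) ∩ (Ω₀ \ Ω)) = 0 :=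
      measure_mono_null (inter_subset_inter_left _ hγβ) ha'
    have hzero : P (Et t) (Ω₀ \ Ω) = 0 := by
      rw [hd (Et t) Ω₀ hΩ₀ hfin (Ω₀ \ Ω) diff_subset
        (hΩ₀.measurableSet.diff hΩ.measurableSet)]
      exact setLIntegral_measure_zero _ _ hmeas0
    -- additivity
    have hunion : Ω ∪ (Ω₀ \ Ω) = Ω₀ := union_diff_cancel hsub
    have hadd := hPadd (Et t) Ω₀ hΩ₀ hfin Ω (Ω₀ \ Ω) hΩ.measurableSet
      (hΩ₀.measurableSet.diff hΩ.measurableSet) disjoint_sdiff_right hsub diff_subset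
    rw [hunion] at hadd
    exact ⟨hfin, hzero, by rw [hadd, hzero, add_zero]⟩
  constructor
  · filter_upwards [key] with t h ht
    exact ⟨(h ht).1, (h ht).2.1⟩
  · apply lintegral_congr_ae
    have h0 : ∀ᵐ t : ℝ, t ≠ (0:ℝ) :=
      ae_iff.mpr (by simpa using Real.volume_singleton (a := 0))
    filter_upwards [key, h0] with t h ht
    exact (h ht).2.2
end
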